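/- Let n ≥ 1 and R the n×n right-justified Pascal matrix R(i,j) = C(i-1, n-j). For every positive integer m and indices 1 ≤ i, k ≤ n, the (i,k) entry of R^m equals Σ_{j=1}^{n} v(i,j) λ_j^m v(j,k), where λ_j = (-1)^{n+j} a^{2j-n-1}, a = (1+√5)/2, and v(i,j) = (-1)^j a^{n-j} (1+a^2)^{-(n-1)/2} Σ_{s=1}^{j} (-1)^{i-s} C(i-1,s-1) C(n-i,j-s) a^{2s-i-1}. -/

import Mathlib

open Polynomial Finset


noncomputable def PP (b : ℝ) (i m : ℕ) : Polynomial ℝ :=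
  (1 + Polynomial.C b * Polynomial.X) ^ i * (1 + Polynomial.X) ^ m

lemma coeff_comp_C_mul_X (p : Polynomial ℝ) (c : ℝ) (k : ℕ) :
    (p.comp (Polynomial.C c * Polynomial.X)).coeff k = c ^ k * p.coeff k := by
  rw [Polynomial.comp_eq_sum_left, Polynomial.sum, Polynomial.finset_sum_coeff]
  simp only [mul_pow, ← Polynomial.C_pow, ← mul_assoc, ← Polynomial.C_mul,
    Polynomial.coeff_C_mul_X_pow]
  rw [Finset.sum_eq_single k]
  · simp [mul_comm]
  · intro b _ hb; simp [Ne.symm hb]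
  · intro h; simp [Polynomial.notMem_support_iff.mp h]

lemma coeff_one_add_C_mul_X_pow (c : ℝ) (i r : ℕ) :
    ((1 + Polynomial.C c * Polynomial.X) ^ i).coeff r = (i.choose r : ℝ) * c ^ r := by
  have h : ((1 : Polynomial ℝ) + Polynomial.C c * Polynomial.X)
      = ((1 : Polynomial ℝ) + Polynomial.X).comp (Polynomial.C c * Polynomial.X) := by
    simp
  rw [h, ← Polynomial.pow_comp, coeff_comp_C_mul_X, Polynomial.coeff_one_add_X_pow]
  ring

lemma coeff_PP (b : ℝ) (i m j : ℕ) :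
    (PP b i m).coeff j = ∑ r ∈ Finset.range (j + 1),
      (i.choose r : ℝ) * b ^ r * (m.choose (j - r) : ℝ) := by
  rw [PP, Polynomial.coeff_mul, Finset.Nat.sum_antidiagonal_eq_sum_range_succ_mk]
  simp [coeff_one_add_C_mul_X_pow, Polynomial.coeff_one_add_X_pow]

lemma natDegree_PP_le (b : ℝ) (i m : ℕ) : (PP b i m).natDegree ≤ i + m := by
  apply (Polynomial.natDegree_mul_le).trans
  gcongr
  · exact (Polynomial.natDegree_pow_le).trans (by
      have : ((1 : Polynomial ℝ) + Polynomial.C b * Polynomial.X).natDegree ≤ 1 := by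
        apply (Polynomial.natDegree_add_le _ _).trans
        simp [Polynomial.natDegree_C_mul_le]
        exact (Polynomial.natDegree_C_mul_le _ _).trans (by simp)
      calc i * _ ≤ i * 1 := by gcongr
        _ = i := mul_one i)
  · exact (Polynomial.natDegree_pow_le).trans (by
      have : ((1 : Polynomial ℝ) + Polynomial.X).natDegree ≤ 1 := by
        apply (Polynomial.natDegree_add_le _ _).trans; simp
      calc m * _ ≤ m * 1 := by gcongr
        _ = m := mul_one m)

lemma eval_PP (b : ℝ) (i m : ℕ) (y : ℝ) :
    (PP b i m).eval y = (1 + b * y) ^ i * (1 + y) ^ m := by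
  simp [PP]

lemma key1 (a : ℝ) (ha : 0 < a) (d i : ℕ) (hi : i ≤ d) :
    ∑ j ∈ Finset.range (d + 1),
      Polynomial.C ((PP (-(a ^ 2)) i (d - i)).coeff j * a ^ (2 * (d - j))) * PP (-(a ^ 2)) j (d - j)
      = Polynomial.C ((1 + a ^ 2) ^ d * a ^ (2 * i)) * Polynomial.X ^ i := by
  apply Polynomial.eq_of_infinite_eval_eq
  apply Set.Infinite.mono (s := Set.Ioi (1 : ℝ)) _ (Set.Ioi_infinite 1)
  intro x hx
  simp only [Set.mem_Ioi] at hx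
  simp only [Set.mem_setOf_eq, Polynomial.eval_finset_sum, Polynomial.eval_mul,
    Polynomial.eval_C, Polynomial.eval_pow, Polynomial.eval_X, eval_PP]
  have hx0 : (0:ℝ) < 1 + x := by linarith
  obtain ⟨z, hzdef⟩ : ∃ t : ℝ, t = a ^ 2 * (1 + x) := ⟨_, rfl⟩
  obtain ⟨y, hydef⟩ : ∃ t : ℝ, t = (1 - a ^ 2 * x) / z := ⟨_, rfl⟩
  have hz : (0:ℝ) < z := by rw [hzdef]; positivity
  have hA : ∀ j ∈ Finset.range (d + 1),
      (PP (-(a ^ 2)) i (d - i)).coeff j * a ^ (2 * (d - j)) * ((1 + -(a^2) * x) ^ j * (1 + x) ^ (d - j))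
      = z ^ d * ((PP (-(a ^ 2)) i (d - i)).coeff j * y ^ j) := by
    intro j hj
    simp only [Finset.mem_range, Nat.lt_succ_iff] at hj
    have h1 : (1 : ℝ) + -(a^2) * x = y * z := by
      rw [hydef, div_mul_cancel₀ _ (ne_of_gt hz)]; ring
    rw [h1, mul_pow]
    have h2 : z ^ d = z ^ j * z ^ (d - j) := by rw [← pow_add, Nat.add_sub_cancel' hj]
    have h3 : a ^ (2 * (d - j)) * (1 + x) ^ (d - j) = z ^ (d - j) := by
      rw [hzdef, mul_pow, pow_mul]
    rw [h2]; rw [← h3]; ring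
  rw [Finset.sum_congr rfl hA, ← Finset.mul_sum]
  have hdeg : (PP (-(a^2)) i (d - i)).natDegree < d + 1 := by
    have := natDegree_PP_le (-(a^2)) i (d - i)
    omega
  rw [← Polynomial.eval_eq_sum_range' hdeg y, eval_PP]
  have hB' : (1 + -(a ^ 2) * y) * (1 + x) = x * (1 + a ^ 2) := by
    rw [hydef, hzdef]; field_simp; ring
  have hC' : (1 + y) * z = 1 + a ^ 2 := by
    rw [hydef]; field_simp [ne_of_gt hz]; rw [hzdef]; ring
  have h2 : z ^ d = z ^ (d - i) * ((a ^ 2) ^ i * (1 + x) ^ i) := by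
    rw [← mul_pow, ← hzdef, ← pow_add, Nat.sub_add_cancel hi]
  have key : z ^ (d - i) * ((a ^ 2) ^ i * (1 + x) ^ i) *
      ((1 + -(a ^ 2) * y) ^ i * (1 + y) ^ (d - i))
      = (1 + a ^ 2) ^ (d - i) * (1 + a ^ 2) ^ i * a ^ (2 * i) * x ^ i := by
    calc z ^ (d - i) * ((a ^ 2) ^ i * (1 + x) ^ i) *
        ((1 + -(a ^ 2) * y) ^ i * (1 + y) ^ (d - i))
        = (a ^ 2) ^ i * ((1 + -(a ^ 2) * y) * (1 + x)) ^ i * ((1 + y) * z) ^ (d - i) := by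
          rw [mul_pow, mul_pow]; ring
      _ = (a ^ 2) ^ i * (x * (1 + a ^ 2)) ^ i * (1 + a ^ 2) ^ (d - i) := by rw [hB', hC']
      _ = (1 + a ^ 2) ^ (d - i) * (1 + a ^ 2) ^ i * a ^ (2 * i) * x ^ i := by
          rw [mul_pow]; ring
  have h4 : ((1:ℝ) + a ^ 2) ^ d = (1 + a ^ 2) ^ (d - i) * (1 + a ^ 2) ^ i := by
    rw [← pow_add, Nat.sub_add_cancel hi]
  rw [h2, h4]
  linear_combination key

lemma key2 (a : ℝ) (ha2 : a ^ 2 = a + 1) (d i : ℕ) (hi : i ≤ d) :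
    ∑ j ∈ Finset.range (d + 1),
      Polynomial.C ((i.choose j : ℝ) * (-a) ^ j * a ^ i) * PP (-(a ^ 2)) (d - j) j
      = Polynomial.C ((-1 : ℝ) ^ i) *
        ((1 + Polynomial.C (a ^ 4) * Polynomial.X) ^ i *
          (1 + Polynomial.C (-(a ^ 2)) * Polynomial.X) ^ (d - i)) := by
  rw [← Finset.sum_subset
    (Finset.range_subset_range.2 (by omega) : Finset.range (i+1) ⊆ Finset.range (d+1))
    (by intro j hjd hj
        simp only [Finset.mem_range, Nat.lt_succ_iff, not_le] at hj
        rw [Nat.choose_eq_zero_of_lt hj]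
        simp)]
  · have hsplit : ∀ j ∈ Finset.range (i + 1),
        Polynomial.C ((i.choose j : ℝ) * (-a) ^ j * a ^ i) * PP (-(a ^ 2)) (d - j) j
        = Polynomial.C (a ^ i) * (1 + Polynomial.C (-(a ^ 2)) * Polynomial.X) ^ (d - i) *
          ((Polynomial.C (-a) * (1 + Polynomial.X)) ^ j *
            (1 + Polynomial.C (-(a ^ 2)) * Polynomial.X) ^ (i - j) * (i.choose j : Polynomial ℝ)) := by
      intro j hj
      simp only [Finset.mem_range, Nat.lt_succ_iff] at hj
      rw [PP]
      have hdj : d - j = (d - i) + (i - j) := by omega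
      rw [hdj, pow_add, mul_pow]
      simp only [Polynomial.C_mul, Polynomial.C_pow, Polynomial.C_neg, Polynomial.C_eq_natCast]
      ring
    rw [Finset.sum_congr rfl hsplit, ← Finset.mul_sum, ← Commute.add_pow (Commute.all _ _)]
    have hmid : (Polynomial.C (-a) * (1 + Polynomial.X) +
        (1 + Polynomial.C (-(a ^ 2)) * Polynomial.X)) ^ i * Polynomial.C (a ^ i)
        = Polynomial.C ((-1 : ℝ) ^ i) * (1 + Polynomial.C (a ^ 4) * Polynomial.X) ^ i := by
      rw [Polynomial.C_pow, Polynomial.C_pow, ← mul_pow, ← mul_pow]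
      congr 1
      have : (Polynomial.C (-a) * (1 + Polynomial.X) +
          (1 + Polynomial.C (-(a ^ 2)) * Polynomial.X)) * Polynomial.C a
          = Polynomial.C (a - a ^ 2) + Polynomial.C (-(a^2 + a^3)) * Polynomial.X := by
        simp only [Polynomial.C_add, Polynomial.C_sub, Polynomial.C_neg, Polynomial.C_mul,
          Polynomial.C_pow]
        ring
      rw [this]
      have h1 : a - a ^ 2 = -1 := by nlinarith [ha2]
      have h2 : a ^ 2 + a ^ 3 = a ^ 4 := by nlinarith [ha2]
      rw [h1, h2]
      simp only [Polynomial.C_neg, Polynomial.C_1]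
      ring
    calc Polynomial.C (a ^ i) * (1 + Polynomial.C (-(a ^ 2)) * Polynomial.X) ^ (d - i) *
        (Polynomial.C (-a) * (1 + Polynomial.X) + (1 + Polynomial.C (-(a ^ 2)) * Polynomial.X)) ^ i
        = (Polynomial.C (-a) * (1 + Polynomial.X) +
            (1 + Polynomial.C (-(a ^ 2)) * Polynomial.X)) ^ i * Polynomial.C (a ^ i) *
          (1 + Polynomial.C (-(a ^ 2)) * Polynomial.X) ^ (d - i) := by ring
      _ = _ := by rw [hmid]; ring

lemma coeff_Q (a : ℝ) (d i k : ℕ) :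
    ((1 + Polynomial.C (a ^ 4) * Polynomial.X) ^ i *
      (1 + Polynomial.C (-(a ^ 2)) * Polynomial.X) ^ (d - i)).coeff k
    = (-(a ^ 2)) ^ k * (PP (-(a ^ 2)) i (d - i)).coeff k := by
  have hcomp : (PP (-(a ^ 2)) i (d - i)).comp (Polynomial.C (-(a ^ 2)) * Polynomial.X)
      = (1 + Polynomial.C (a ^ 4) * Polynomial.X) ^ i *
        (1 + Polynomial.C (-(a ^ 2)) * Polynomial.X) ^ (d - i) := by
    rw [PP]
    simp only [Polynomial.mul_comp, Polynomial.pow_comp, Polynomial.add_comp,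
      Polynomial.one_comp, Polynomial.mul_comp, Polynomial.C_comp, Polynomial.X_comp]
    congr 3
    rw [← mul_assoc, ← Polynomial.C_mul]
    norm_num
    ring
  rw [← hcomp, coeff_comp_C_mul_X]

lemma key1' (a : ℝ) (ha : 0 < a) (d i k : ℕ) (hi : i ≤ d) :
    ∑ j ∈ Finset.range (d + 1),
      (PP (-(a ^ 2)) i (d - i)).coeff j * a ^ (2 * (d - j)) * (PP (-(a ^ 2)) j (d - j)).coeff k
      = if i = k then (1 + a ^ 2) ^ d * a ^ (2 * i) else 0 := by
  have h := congrArg (fun p => Polynomial.coeff p k) (key1 a ha d i hi)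
  simp only [Polynomial.finset_sum_coeff, Polynomial.coeff_C_mul, Polynomial.coeff_X_pow] at h
  rw [h]
  by_cases hik : i = k <;> simp [hik, eq_comm]

lemma key2' (a : ℝ) (ha2 : a ^ 2 = a + 1) (d i k : ℕ) (hi : i ≤ d) :
    ∑ j ∈ Finset.range (d + 1),
      (i.choose j : ℝ) * (-a) ^ j * a ^ i * (PP (-(a ^ 2)) (d - j) j).coeff k
      = (-1 : ℝ) ^ i * ((-(a ^ 2)) ^ k * (PP (-(a ^ 2)) i (d - i)).coeff k) := by
  have h := congrArg (fun p => Polynomial.coeff p k) (key2 a ha2 d i hi)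
  simp only [Polynomial.finset_sum_coeff, Polynomial.coeff_C_mul] at h
  rw [h, coeff_Q]

lemma neg_one_pow_eq (p q : ℕ) (h : p % 2 = q % 2) : ((-1:ℝ)) ^ p = (-1) ^ q := by
  rw [← Nat.div_add_mod p 2, ← Nat.div_add_mod q 2, h]
  rw [pow_add, pow_add, pow_mul, pow_mul, neg_one_sq, one_pow, one_pow]

lemma neg_one_zpow_sub (p q : ℤ) : ((-1:ℝ)) ^ (p - q) = (-1) ^ p * (-1) ^ q := by
  have hq : ((-1:ℝ)) ^ (-q) = (-1) ^ q := by
    rw [zpow_neg]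
    have : ((-1:ℝ) ^ q) * ((-1) ^ q) = 1 := by
      rw [← zpow_add₀ (by norm_num : (-1:ℝ) ≠ 0), ← two_mul, zpow_mul]
      norm_num
    field_simp
    nlinarith [this]
  rw [sub_eq_add_neg, zpow_add₀ (by norm_num : (-1:ℝ) ≠ 0), hq]


lemma V_eq (n : ℕ) (a : ℝ) (ha0 : a ≠ 0) (c : ℝ) (i j : Fin n) :
    ((-1 : ℝ) ^ (j.1 + 1) * a ^ ((n : ℤ) - ((j.1 : ℤ) + 1)) * c *
      ∑ s ∈ Finset.Icc 1 (j.1 + 1),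
        (-1 : ℝ) ^ ((i.1 : ℤ) + 1 - (s : ℤ)) * (Nat.choose i.1 (s - 1) : ℝ) *
          (Nat.choose (n - (i.1 + 1)) ((j.1 + 1) - s) : ℝ) *
          a ^ (2 * (s : ℤ) - ((i.1 : ℤ) + 1) - 1))
    = (-1:ℝ) ^ (i.1 + j.1 + 1) * c * a ^ ((n:ℤ) - 1 - i.1 - j.1) *
      (PP (-(a^2)) i.1 (n - 1 - i.1)).coeff j.1 := by
  obtain ⟨I, hI⟩ : ∃ t : ℕ, t = i.1 := ⟨_, rfl⟩
  obtain ⟨J, hJ⟩ : ∃ t : ℕ, t = j.1 := ⟨_, rfl⟩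
  have hIn : I < n := hI ▸ i.2
  rw [← hI, ← hJ]
  rw [← Finset.Ico_add_one_right_eq_Icc, Finset.sum_Ico_eq_sum_range,
    show J + 1 + 1 - 1 = J + 1 from rfl]
  rw [coeff_PP, Finset.mul_sum, Finset.mul_sum]
  apply Finset.sum_congr rfl
  intro r hr
  simp only [Finset.mem_range] at hr
  -- clean up nat subtractions
  have e1 : 1 + r - 1 = r := by omega
  have e2 : J + 1 - (1 + r) = J - r := by omega
  have e3 : n - (I + 1) = n - 1 - I := by omega
  rw [e1, e2, e3]
  -- signs and powers
  have hcast : ((1 + r : ℕ) : ℤ) = 1 + (r : ℤ) := by push_cast; ring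
  rw [hcast]
  have hsgn : (-1 : ℝ) ^ ((I : ℤ) + 1 - (1 + (r:ℤ))) = (-1 : ℝ) ^ I * (-1 : ℝ) ^ r := by
    have : (I : ℤ) + 1 - (1 + (r:ℤ)) = (I : ℤ) - (r : ℤ) := by ring
    rw [this, neg_one_zpow_sub, zpow_natCast, zpow_natCast]
  have hpow : a ^ (2 * (1 + (r:ℤ)) - ((I:ℤ) + 1) - 1) = a ^ (2 * r) * a ^ (-(I:ℤ)) := by
    rw [← zpow_natCast a (2 * r), ← zpow_add₀ ha0]
    congr 1
    push_cast
    ring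
  rw [hsgn, hpow]
  have hneg : ((-(a^2)) : ℝ) ^ r = (-1 : ℝ) ^ r * a ^ (2 * r) := by
    rw [neg_pow, pow_mul]
  rw [hneg]
  have hapow : a ^ ((n:ℤ) - ((J:ℤ) + 1)) * a ^ (-(I:ℤ)) = a ^ ((n:ℤ) - 1 - (I:ℤ) - (J:ℤ)) := by
    rw [← zpow_add₀ ha0]; congr 1; ring
  have hsgn2 : (-1:ℝ) ^ (J + 1) * ((-1:ℝ) ^ I * (-1:ℝ) ^ r) =
      (-1:ℝ) ^ (I + J + 1) * (-1:ℝ) ^ r := by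
    rw [← pow_add, ← pow_add, ← pow_add]
    exact neg_one_pow_eq _ _ (by omega)
  calc (-1:ℝ) ^ (J + 1) * a ^ ((n:ℤ) - ((J:ℤ) + 1)) * c *
      ((-1:ℝ) ^ I * (-1:ℝ) ^ r * (I.choose r : ℝ) * ((n-1-I).choose (J - r) : ℝ) *
        (a ^ (2 * r) * a ^ (-(I:ℤ))))
      = ((-1:ℝ) ^ (J + 1) * ((-1:ℝ) ^ I * (-1:ℝ) ^ r)) * c *
        (a ^ ((n:ℤ) - ((J:ℤ) + 1)) * a ^ (-(I:ℤ))) *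
        ((I.choose r : ℝ) * ((n-1-I).choose (J - r) : ℝ) * a ^ (2 * r)) := by ring
    _ = _ := by rw [hapow, hsgn2]; ring


lemma VV (n : ℕ) (hn : 1 ≤ n) (a c : ℝ) (hapos : 0 < a)
    (hc2 : c ^ 2 * (1 + a ^ 2) ^ (n - 1) = 1)
    (V : Matrix (Fin n) (Fin n) ℝ)
    (hVP : ∀ i j : Fin n, V i j = (-1:ℝ) ^ (i.1 + j.1 + 1) * c * a ^ ((n:ℤ) - 1 - i.1 - j.1) *
      (PP (-(a^2)) i.1 (n - 1 - i.1)).coeff j.1) :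
    V * V = 1 := by
  have ha0 : a ≠ 0 := ne_of_gt hapos
  obtain ⟨d, hd⟩ : ∃ d, n = d + 1 := ⟨n - 1, by omega⟩
  have hdn : n - 1 = d := by omega
  ext i k
  rw [Matrix.mul_apply, Matrix.one_apply]
  simp only [hVP]
  rw [Fin.sum_univ_eq_sum_range (fun J => (-1:ℝ) ^ (i.1 + J + 1) * c * a ^ ((n:ℤ) - 1 - i.1 - J) *
    (PP (-(a^2)) i.1 (n - 1 - i.1)).coeff J *
    ((-1:ℝ) ^ (J + k.1 + 1) * c * a ^ ((n:ℤ) - 1 - J - k.1) *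
      (PP (-(a^2)) J (n - 1 - J)).coeff k.1))]
  obtain ⟨I, hI⟩ : ∃ t : ℕ, t = i.1 := ⟨_, rfl⟩
  obtain ⟨K, hK⟩ : ∃ t : ℕ, t = k.1 := ⟨_, rfl⟩
  have hId : I ≤ d := by have := i.2; omega
  rw [← hI, ← hK, hdn]
  have hterm : ∀ J ∈ Finset.range n,
      (-1:ℝ) ^ (I + J + 1) * c * a ^ ((n:ℤ) - 1 - I - J) * (PP (-(a^2)) I (d - I)).coeff J *
      ((-1:ℝ) ^ (J + K + 1) * c * a ^ ((n:ℤ) - 1 - J - K) * (PP (-(a^2)) J (d - J)).coeff K)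
      = ((-1:ℝ) ^ (I + K) * c ^ 2 * a ^ (-(I:ℤ) - K)) *
        ((PP (-(a^2)) I (d - I)).coeff J * a ^ (2 * (d - J)) * (PP (-(a^2)) J (d - J)).coeff K) := by
    intro J hJ
    simp only [Finset.mem_range] at hJ
    have hJd : J ≤ d := by omega
    have hz : a ^ ((n:ℤ) - 1 - I - J) * a ^ ((n:ℤ) - 1 - J - K)
        = a ^ (-(I:ℤ) - K) * a ^ (2 * (d - J)) := by
      rw [← zpow_natCast a (2 * (d - J)), ← zpow_add₀ ha0, ← zpow_add₀ ha0]
      congr 1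
      have h1 : ((2 * (d - J) : ℕ) : ℤ) = 2 * (d:ℤ) - 2 * J := by omega
      rw [h1]; omega
    have hs : (-1:ℝ) ^ (I + J + 1) * (-1:ℝ) ^ (J + K + 1) = (-1:ℝ) ^ (I + K) := by
      rw [← pow_add]; exact neg_one_pow_eq _ _ (by omega)
    calc (-1:ℝ) ^ (I + J + 1) * c * a ^ ((n:ℤ) - 1 - I - J) * (PP (-(a^2)) I (d - I)).coeff J *
        ((-1:ℝ) ^ (J + K + 1) * c * a ^ ((n:ℤ) - 1 - J - K) * (PP (-(a^2)) J (d - J)).coeff K)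
        = ((-1:ℝ) ^ (I + J + 1) * (-1:ℝ) ^ (J + K + 1)) * c ^ 2 *
          (a ^ ((n:ℤ) - 1 - I - J) * a ^ ((n:ℤ) - 1 - J - K)) *
          ((PP (-(a^2)) I (d - I)).coeff J * (PP (-(a^2)) J (d - J)).coeff K) := by ring
      _ = _ := by rw [hz, hs]; ring
  rw [Finset.sum_congr rfl hterm, ← Finset.mul_sum]
  rw [show Finset.range n = Finset.range (d + 1) from by rw [hd]]
  rw [key1' a hapos d I K hId]
  by_cases hik : i = k
  · have hIK : I = K := by rw [hI, hK, hik]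
    rw [if_pos hik, if_pos hIK]
    have h1 : (-1:ℝ) ^ (I + K) = 1 := by
      rw [hIK]; exact neg_one_pow_eq (K + K) 0 (by omega)
    have h2 : a ^ (-(I:ℤ) - K) * a ^ (2 * I) = 1 := by
      rw [← zpow_natCast a (2 * I), ← zpow_add₀ ha0, hIK]
      rw [show -(K:ℤ) - K + ((2 * K : ℕ) : ℤ) = 0 from by omega, zpow_zero]
    calc (-1:ℝ) ^ (I + K) * c ^ 2 * a ^ (-(I:ℤ) - K) * ((1 + a ^ 2) ^ d * a ^ (2 * I))
        = ((-1:ℝ) ^ (I + K)) * (c ^ 2 * (1 + a ^ 2) ^ d) * (a ^ (-(I:ℤ) - K) * a ^ (2 * I)) := by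
          ring
      _ = 1 := by rw [h1, h2, ← hdn, hc2]; ring
  · have hIK : ¬ I = K := by
      intro h; apply hik; apply Fin.ext; rw [← hI, ← hK, h]
    rw [if_neg hik, if_neg hIK, mul_zero]


lemma RV (n : ℕ) (hn : 1 ≤ n) (a c : ℝ) (hapos : 0 < a) (ha2 : a ^ 2 = a + 1)
    (R V : Matrix (Fin n) (Fin n) ℝ)
    (hR : ∀ i j : Fin n, R i j = (Nat.choose i.1 (n - (j.1 + 1)) : ℝ))
    (hVP : ∀ i j : Fin n, V i j = (-1:ℝ) ^ (i.1 + j.1 + 1) * c * a ^ ((n:ℤ) - 1 - i.1 - j.1) *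
      (PP (-(a^2)) i.1 (n - 1 - i.1)).coeff j.1) :
    R * V = V * Matrix.diagonal
      (fun j : Fin n => (-1:ℝ) ^ (n + (j.1 + 1)) * a ^ (2 * ((j.1:ℤ) + 1) - n - 1)) := by
  have ha0 : a ≠ 0 := ne_of_gt hapos
  obtain ⟨d, hd⟩ : ∃ d, n = d + 1 := ⟨n - 1, by omega⟩
  have hdn : n - 1 = d := by omega
  ext i k
  rw [Matrix.mul_apply, Matrix.mul_diagonal]
  simp only [hR, hVP]
  rw [Fin.sum_univ_eq_sum_range (fun J => (Nat.choose i.1 (n - (J + 1)) : ℝ) *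
    ((-1:ℝ) ^ (J + k.1 + 1) * c * a ^ ((n:ℤ) - 1 - J - k.1) *
      (PP (-(a^2)) J (n - 1 - J)).coeff k.1))]
  obtain ⟨I, hI⟩ : ∃ t : ℕ, t = i.1 := ⟨_, rfl⟩
  obtain ⟨K, hK⟩ : ∃ t : ℕ, t = k.1 := ⟨_, rfl⟩
  have hId : I ≤ d := by have := i.2; omega
  have hKd : K ≤ d := by have := k.2; omega
  rw [← hI, ← hK, hdn]
  rw [← Finset.sum_range_reflect]
  have hterm : ∀ J ∈ Finset.range n,
      (Nat.choose I (n - ((n - 1 - J) + 1)) : ℝ) *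
        ((-1:ℝ) ^ ((n - 1 - J) + K + 1) * c * a ^ ((n:ℤ) - 1 - ((n - 1 - J : ℕ):ℤ) - K) *
          (PP (-(a^2)) (n - 1 - J) (d - (n - 1 - J))).coeff K)
      = ((-1:ℝ) ^ (d + K + 1) * c * a ^ (-(K:ℤ) - I)) *
        ((I.choose J : ℝ) * (-a) ^ J * a ^ I * (PP (-(a^2)) (d - J) J).coeff K) := by
    intro J hJ
    simp only [Finset.mem_range] at hJ
    have hJd : J ≤ d := by omega
    have e0 : n - 1 - J = d - J := by omega
    have e1 : n - (d - J + 1) = J := by omega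
    have e2 : d - (d - J) = J := by omega
    rw [e0, e1, e2]
    have hsgn : (-1:ℝ) ^ (d - J + K + 1) = (-1:ℝ) ^ (d + K + 1) * (-1:ℝ) ^ J := by
      rw [← pow_add]; exact neg_one_pow_eq _ _ (by omega)
    have hz : a ^ ((n:ℤ) - 1 - ((d - J : ℕ):ℤ) - K) = a ^ (-(K:ℤ) - I) * (a ^ J * a ^ I) := by
      rw [← zpow_natCast a J, ← zpow_natCast a I, ← zpow_add₀ ha0, ← zpow_add₀ ha0]
      congr 1
      omega
    rw [hsgn, hz, neg_pow a J]
    ring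
  rw [Finset.sum_congr rfl hterm, ← Finset.mul_sum]
  rw [show Finset.range n = Finset.range (d + 1) from by rw [hd]]
  rw [key2' a ha2 d I K hId]
  have hA : a ^ (-(K:ℤ) - I) * a ^ (2 * K) = a ^ ((K:ℤ) - I) := by
    rw [← zpow_natCast a (2 * K), ← zpow_add₀ ha0]
    congr 1
    omega
  have hB : a ^ ((n:ℤ) - 1 - I - K) * a ^ (2 * ((K:ℤ) + 1) - n - 1) = a ^ ((K:ℤ) - I) := by
    rw [← zpow_add₀ ha0]
    congr 1
    ring
  have hsign : (-1:ℝ) ^ (d + K + 1) * (-1:ℝ) ^ I * (-1:ℝ) ^ K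
      = (-1:ℝ) ^ (I + K + 1) * (-1:ℝ) ^ (n + (K + 1)) := by
    rw [← pow_add, ← pow_add, ← pow_add]
    exact neg_one_pow_eq _ _ (by omega)
  calc ((-1:ℝ) ^ (d + K + 1) * c * a ^ (-(K:ℤ) - I)) *
      ((-1:ℝ) ^ I * ((-(a^2)) ^ K * (PP (-(a^2)) I (d - I)).coeff K))
      = ((-1:ℝ) ^ (d + K + 1) * (-1:ℝ) ^ I * (-1:ℝ) ^ K) * c *
        (a ^ (-(K:ℤ) - I) * a ^ (2 * K)) * (PP (-(a^2)) I (d - I)).coeff K := by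
        rw [show ((-(a^2)) : ℝ) ^ K = (-1:ℝ) ^ K * a ^ (2 * K) from by rw [neg_pow, pow_mul]]
        ring
    _ = ((-1:ℝ) ^ (I + K + 1) * (-1:ℝ) ^ (n + (K + 1))) * c * a ^ ((K:ℤ) - I) *
        (PP (-(a^2)) I (d - I)).coeff K := by rw [hA, hsign]
    _ = (-1:ℝ) ^ (I + K + 1) * c * a ^ ((n:ℤ) - 1 - I - K) *
        (PP (-(a^2)) I (d - I)).coeff K *
        ((-1:ℝ) ^ (n + (K + 1)) * a ^ (2 * ((K:ℤ) + 1) - n - 1)) := by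
        rw [← hB]; ring


/-- Spectral formula for powers of the right-justified Pascal matrix:
`(R^m)(i,k) = ∑_j v(i,j) λ_j^m v(j,k)`. -/
theorem stmt10 (n : ℕ) (hn : 1 ≤ n) (a : ℝ) (ha : a = (1 + Real.sqrt 5) / 2)
    (R : Matrix (Fin n) (Fin n) ℝ)
    (hR : ∀ i j : Fin n, R i j = (Nat.choose i.1 (n - (j.1 + 1)) : ℝ))
    (V : Matrix (Fin n) (Fin n) ℝ)
    (hV : ∀ i j : Fin n, V i j =
      (-1 : ℝ) ^ (j.1 + 1) * a ^ ((n : ℤ) - ((j.1 : ℤ) + 1)) *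
        (Real.sqrt ((1 + a ^ 2) ^ (n - 1)))⁻¹ *
        ∑ s ∈ Finset.Icc 1 (j.1 + 1),
          (-1 : ℝ) ^ ((i.1 : ℤ) + 1 - s) * (Nat.choose i.1 (s - 1) : ℝ) *
            (Nat.choose (n - (i.1 + 1)) ((j.1 + 1) - s) : ℝ) *
            a ^ (2 * (s : ℤ) - ((i.1 : ℤ) + 1) - 1))
    (m : ℕ) (hm : 1 ≤ m) (i k : Fin n) :
    (R ^ m) i k = ∑ j : Fin n,
      V i j * ((-1 : ℝ) ^ (n + (j.1 + 1)) * a ^ (2 * ((j.1 : ℤ) + 1) - (n : ℤ) - 1)) ^ m *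
        V j k := by
  have h5 : Real.sqrt 5 ^ 2 = 5 := Real.sq_sqrt (by norm_num)
  have h5nn : (0:ℝ) ≤ Real.sqrt 5 := Real.sqrt_nonneg 5
  have ha2 : a ^ 2 = a + 1 := by rw [ha]; nlinarith [h5]
  have hapos : 0 < a := by rw [ha]; nlinarith [h5nn]
  have ha0 : a ≠ 0 := ne_of_gt hapos
  obtain ⟨c, hcdef⟩ : ∃ t : ℝ, t = (Real.sqrt ((1 + a ^ 2) ^ (n - 1)))⁻¹ := ⟨_, rfl⟩
  have hc2 : c ^ 2 * (1 + a ^ 2) ^ (n - 1) = 1 := by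
    have hpos : (0:ℝ) < (1 + a ^ 2) ^ (n - 1) := by positivity
    rw [hcdef, inv_pow, Real.sq_sqrt (le_of_lt hpos), inv_mul_cancel₀ (ne_of_gt hpos)]
  have hVP : ∀ i j : Fin n, V i j = (-1:ℝ) ^ (i.1 + j.1 + 1) * c * a ^ ((n:ℤ) - 1 - i.1 - j.1) *
      (PP (-(a^2)) i.1 (n - 1 - i.1)).coeff j.1 := by
    intro i j
    rw [hV i j, ← hcdef]
    exact V_eq n a ha0 c i j
  have hvv := VV n hn a c hapos hc2 V hVP
  have hrv := RV n hn a c hapos ha2 R V hR hVP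
  obtain ⟨lam, hlam⟩ : ∃ t : Fin n → ℝ, t = fun j : Fin n =>
      (-1:ℝ) ^ (n + (j.1 + 1)) * a ^ (2 * ((j.1:ℤ) + 1) - n - 1) := ⟨_, rfl⟩
  rw [← hlam] at hrv
  have hRm : ∀ m : ℕ, R ^ m = V * Matrix.diagonal lam ^ m * V := by
    intro m
    induction m with
    | zero => rw [pow_zero, pow_zero, Matrix.mul_one, hvv]
    | succ m ih =>
      have hR' : R = V * Matrix.diagonal lam * V := by
        calc R = R * (V * V) := by rw [hvv, Matrix.mul_one]
          _ = (R * V) * V := by rw [Matrix.mul_assoc]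
          _ = V * Matrix.diagonal lam * V := by rw [hrv]
      rw [pow_succ, ih, pow_succ]
      rw [hR']
      have h1 : V * Matrix.diagonal lam ^ m * V * (V * Matrix.diagonal lam * V)
          = V * Matrix.diagonal lam ^ m * (V * V) * (Matrix.diagonal lam * V) := by
        simp only [Matrix.mul_assoc]
      rw [h1, hvv, Matrix.mul_one]
      simp only [Matrix.mul_assoc]
  rw [hRm m, Matrix.diagonal_pow, Matrix.mul_apply]
  simp only [Matrix.mul_diagonal, Pi.pow_apply, hlam]
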